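/- Suppose π* ≥ 1 satisfies Φ(π*) = c. Then there exist a demand profile d ∈ D and an index k ∈ [T] such that ∑_{t=1}^T δ_t(π*,d) = c, δ_t(π*,d) > 0 for all t ≤ k, and δ_t(π*,d) = 0 for all t > k; that is, there is a worst-case input sequence for pCR-PRM(π*) on which the algorithm discharges strictly positive amounts in an initial block of consecutive slots until exhausting the capacity, and nothing afterwards. -/

import Mathlib

open Finset MeasureTheory

noncomputable section

/-- A discharging vector `δ` is feasible for demand profile `d` (with capacity `c`
and per-slot limit `dmax`). -/
def Feasible {T : ℕ} (c dmax : ℝ) (d δ : Fin T → ℝ) : Prop :=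
  (∑ t, δ t) ≤ c ∧ ∀ t, 0 ≤ δ t ∧ δ t ≤ min dmax (d t)

/-- Peak-demand reduction `R(d, δ)`. -/
noncomputable def Red {T : ℕ} (d δ : Fin T → ℝ) : ℝ :=
  (⨆ t, d t) - ⨆ t, (d t - δ t)

/-- Offline optimal peak-demand reduction `σ(d)`. -/
noncomputable def offOpt {T : ℕ} (c dmax : ℝ) (d : Fin T → ℝ) : ℝ :=
  sSup {r | ∃ δ : Fin T → ℝ, Feasible c dmax d δ ∧ r = Red d δ}

/-- Prefix maximum `max_{k ∈ [t]} d_k`. -/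
noncomputable def prefMax {T : ℕ} (d : Fin T → ℝ) (t : Fin T) : ℝ :=
  ⨆ k : {k : Fin T // k ≤ t}, d k.1

/-- The uncertainty set `D`: all profiles with entries in `[dlo, dhi]`. -/
def inD {T : ℕ} (dlo dhi : ℝ) (d : Fin T → ℝ) : Prop :=
  ∀ t, dlo ≤ d t ∧ d t ≤ dhi

/-- Reference profile `d^t`: observed demands up to slot `t`, lowest demand `dlo` afterwards. -/
def ref {T : ℕ} (dlo : ℝ) (d : Fin T → ℝ) (t : Fin T) : Fin T → ℝ :=
  fun k => if k ≤ t then d k else dlo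

/-- Output of `pCR-PRM(π)` at slot `t`:
`δ_t(π, d) = [d_t − max_{k∈[t]} d_k + σ(d^t)/π]⁺`. -/
noncomputable def pcr {T : ℕ} (c dmax dlo : ℝ) (π : ℝ) (d : Fin T → ℝ) (t : Fin T) : ℝ :=
  max (d t - prefMax d t + offOpt c dmax (ref dlo d t) / π) 0

/-- Inventory function `Φ(π) = sup_{d ∈ D} ∑_t δ_t(π, d)`. -/
noncomputable def Phi (T : ℕ) (c dmax dlo dhi : ℝ) (π : ℝ) : ℝ :=
  sSup {s | ∃ d : Fin T → ℝ, inD dlo dhi d ∧ s = ∑ t, pcr c dmax dlo π d t}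

/-!
The total discharge `d ↦ ∑ₜ δₜ(π, d)` is continuous on the compact box `D`, so `Φ(π) = c` is
attained by a worst-case profile. Among worst-case profiles take one whose initial run of
discharging slots is longest. If that run were followed by an idle slot `n` and later by a
discharging slot, let `q` be the first one after `n`, and swap the demands at `n` and `q`. Slots
outside `[n, q]` then see permuted reference profiles, and `σ` is permutation invariant; slot `n`
sees the running peak slot `q` saw before, with a reference profile that has the same peak and is
pointwise below a permutation of the old one, so it discharges at least `δ_q > 0`. The new
profile is still worst-case and has a longer initial run, a contradiction. The first slot always
discharges, because it sets the running peak and `σ > 0`.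
-/

variable {T : ℕ}

lemma Equiv.swap_apply_le_iff {α : Type*} [LinearOrder α] {a b t : α} (h : a ≤ t ↔ b ≤ t)
    (j : α) : Equiv.swap a b j ≤ t ↔ j ≤ t := by
  rw [Equiv.swap_apply_def]
  split_ifs with ha hb
  · subst ha; exact h.symm
  · subst hb; exact h
  · rfl

lemma exists_forall_le_pos_forall_lt_eq_zero {α : Type*} [LinearOrder α] [Fintype α]
    {f : α → ℝ} (hf : ∀ t, 0 ≤ f t) (hlow : IsLowerSet {t | 0 < f t}) {t₀ : α} (ht₀ : 0 < f t₀) :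
    ∃ k, (∀ t ≤ k, 0 < f t) ∧ ∀ t, k < t → f t = 0 := by
  classical
  obtain ⟨k, hk, hkmax⟩ :=
    (univ.filter fun t => 0 < f t).exists_max_image id ⟨t₀, by simpa using ht₀⟩
  refine ⟨k, fun t ht => hlow ht (by simpa using hk), fun t hkt => ?_⟩
  refine le_antisymm (not_lt.1 fun ht => ?_) (hf t)
  exact hkt.not_ge (hkmax t (by simpa using ht))

lemma abs_sub_le_dist (x y : Fin T → ℝ) (j : Fin T) : |x j - y j| ≤ dist x y := by
  simpa [Real.dist_eq] using dist_le_pi_dist x y j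

section OffOpt

variable {c dmax : ℝ}

lemma Feasible.comp_perm {r δ : Fin T → ℝ} (h : Feasible c dmax r δ) (g : Equiv.Perm (Fin T)) :
    Feasible c dmax (r ∘ g) (δ ∘ g) :=
  ⟨(Equiv.sum_comp g δ).le.trans h.1, fun j => h.2 (g j)⟩

lemma red_comp_perm (r δ : Fin T → ℝ) (g : Equiv.Perm (Fin T)) :
    Red (r ∘ g) (δ ∘ g) = Red r δ := by
  simp only [Red, Function.comp_apply, Equiv.iSup_comp (g := r),
    Equiv.iSup_comp (g := fun j => r j - δ j)]

lemma offOpt_comp_perm (r : Fin T → ℝ) (g : Equiv.Perm (Fin T)) :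
    offOpt c dmax (r ∘ g) = offOpt c dmax r := by
  have hsub : ∀ (r : Fin T → ℝ) (g : Equiv.Perm (Fin T)),
      {x | ∃ δ, Feasible c dmax r δ ∧ x = Red r δ} ⊆
        {x | ∃ δ, Feasible c dmax (r ∘ g) δ ∧ x = Red (r ∘ g) δ} := by
    rintro r g _ ⟨δ, hδ, rfl⟩
    exact ⟨δ ∘ g, hδ.comp_perm g, (red_comp_perm r δ g).symm⟩
  have hr : (r ∘ g) ∘ g.symm = r := by ext; simp
  unfold offOpt
  congr 1
  refine (hsub r g).antisymm' ?_
  simpa only [hr] using hsub (r ∘ g) g.symm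

lemma feasible_zero (hc : 0 ≤ c) (hdmax : 0 ≤ dmax) {r : Fin T → ℝ} (hr : ∀ j, 0 ≤ r j) :
    Feasible c dmax r 0 :=
  ⟨by simpa using hc, fun j => ⟨le_rfl, le_min hdmax (hr j)⟩⟩

lemma offOpt_le (hc : 0 ≤ c) (hdmax : 0 ≤ dmax) {r : Fin T → ℝ} (hr : ∀ j, 0 ≤ r j) {a : ℝ}
    (h : ∀ δ, Feasible c dmax r δ → Red r δ ≤ a) : offOpt c dmax r ≤ a :=
  csSup_le ⟨_, 0, feasible_zero hc hdmax hr, rfl⟩ (by rintro _ ⟨δ, hδ, rfl⟩; exact h δ hδ)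

variable [NeZero T]

lemma Feasible.iSup_sub_nonneg {r δ : Fin T → ℝ} (h : Feasible c dmax r δ) :
    0 ≤ ⨆ j, r j - δ j :=
  (sub_nonneg.2 ((h.2 0).2.trans (min_le_right _ _))).trans (Finite.le_ciSup (fun j => r j - δ j) 0)

lemma le_offOpt {r δ : Fin T → ℝ} (h : Feasible c dmax r δ) : Red r δ ≤ offOpt c dmax r := by
  refine le_csSup ⟨⨆ j, r j, ?_⟩ ⟨δ, h, rfl⟩
  rintro _ ⟨δ, hδ, rfl⟩
  simp only [Red]
  linarith [hδ.iSup_sub_nonneg]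

/-- A discharge `δ` on `r` is transferred to `r'` as `min δⱼ r'ⱼ`; this lowers the peak of `r'`
at least as far as `δ` lowers the peak of `r`, up to `ρ`. -/
lemma offOpt_le_offOpt_add (hc : 0 ≤ c) (hdmax : 0 ≤ dmax) {r r' : Fin T → ℝ}
    (hr : ∀ j, 0 ≤ r j) (hr' : ∀ j, 0 ≤ r' j) {ρ : ℝ} (hρ : 0 ≤ ρ)
    (hle : ∀ j, r' j ≤ r j + ρ) (hsup : ⨆ j, r j ≤ (⨆ j, r' j) + ρ) :
    offOpt c dmax r ≤ offOpt c dmax r' + 2 * ρ := by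
  refine offOpt_le hc hdmax hr fun δ hδ => ?_
  set δ' : Fin T → ℝ := fun j => min (δ j) (r' j)
  have hfeas : Feasible c dmax r' δ' :=
    ⟨(sum_le_sum fun j _ => min_le_left _ _).trans hδ.1, fun j =>
      ⟨le_min (hδ.2 j).1 (hr' j), min_le_min ((hδ.2 j).2.trans (min_le_left _ _)) le_rfl⟩⟩
  have hpeak : ⨆ j, r' j - δ' j ≤ (⨆ j, r j - δ j) + ρ := ciSup_le fun j => by
    have hj := Finite.le_ciSup (fun j => r j - δ j) j
    rcases le_total (δ j) (r' j) with h | h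
    · show r' j - min (δ j) (r' j) ≤ _
      rw [min_eq_left h]
      linarith [hle j]
    · show r' j - min (δ j) (r' j) ≤ _
      rw [min_eq_right h]
      linarith [hδ.iSup_sub_nonneg]
  have := le_offOpt hfeas
  simp only [Red] at this ⊢
  linarith

lemma offOpt_le_add_dist (hc : 0 ≤ c) (hdmax : 0 ≤ dmax) {x y : Fin T → ℝ}
    (hx : ∀ j, 0 ≤ x j) (hy : ∀ j, 0 ≤ y j) :
    offOpt c dmax x ≤ offOpt c dmax y + 2 * dist x y := by
  have hle : ∀ j, y j ≤ x j + dist x y := fun j => by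
    linarith [(abs_sub_le_iff.1 (abs_sub_le_dist x y j)).2]
  refine offOpt_le_offOpt_add hc hdmax hx hy dist_nonneg hle (ciSup_le fun j => ?_)
  linarith [(abs_sub_le_iff.1 (abs_sub_le_dist x y j)).1, Finite.le_ciSup y j]

lemma lipschitzOnWith_offOpt (hc : 0 ≤ c) (hdmax : 0 ≤ dmax) :
    LipschitzOnWith 2 (offOpt c dmax) {x : Fin T → ℝ | ∀ j, 0 ≤ x j} :=
  LipschitzOnWith.of_dist_le_mul fun x hx y hy => by
    rw [Real.dist_eq, abs_sub_le_iff]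
    push_cast
    constructor
    · linarith [offOpt_le_add_dist hc hdmax hx hy]
    · linarith [offOpt_le_add_dist hc hdmax hy hx, dist_comm x y]

lemma offOpt_pos (hc : 0 < c) (hdmax : 0 < dmax) {r : Fin T → ℝ} (hr : ∀ j, 0 ≤ r j)
    (hpeak : 0 < ⨆ j, r j) : 0 < offOpt c dmax r := by
  have hT : (0 : ℝ) < T := by exact_mod_cast Nat.pos_of_ne_zero (NeZero.ne T)
  set P := ⨆ j, r j
  set ε := min (min dmax (c / T)) P
  have hε : 0 < ε := lt_min (lt_min hdmax (div_pos hc hT)) hpeak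
  have hεP : ε ≤ P := min_le_right _ _
  -- shave `ε` off the peak
  set δ : Fin T → ℝ := fun j => max (r j - (P - ε)) 0
  have hδε : ∀ j, δ j ≤ ε := fun j => max_le (by linarith [Finite.le_ciSup r j]) hε.le
  have hfeas : Feasible c dmax r δ := by
    refine ⟨?_, fun j => ⟨le_max_right _ _, le_min ?_ ?_⟩⟩
    · calc ∑ j, δ j ≤ ∑ _j : Fin T, c / T :=
            sum_le_sum fun j _ => (hδε j).trans ((min_le_left _ _).trans (min_le_right _ _))
        _ = c := by rw [sum_const, card_univ, Fintype.card_fin, nsmul_eq_mul]; field_simp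
    · exact (hδε j).trans ((min_le_left _ _).trans (min_le_left _ _))
    · exact max_le (by linarith) (hr j)
  have hred : ε ≤ Red r δ := by
    have : ⨆ j, r j - δ j ≤ P - ε := ciSup_le fun j => by linarith [le_max_left (r j - (P - ε)) 0]
    simp only [Red]
    linarith
  exact hε.trans_le (hred.trans (le_offOpt hfeas))

end OffOpt

instance (t : Fin T) : Nonempty {k : Fin T // k ≤ t} := ⟨⟨t, le_rfl⟩⟩

lemma le_prefMax (d : Fin T → ℝ) {j t : Fin T} (h : j ≤ t) : d j ≤ prefMax d t :=
  Finite.le_ciSup (fun k : {k : Fin T // k ≤ t} => d k.1) ⟨j, h⟩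

lemma prefMax_le {d : Fin T → ℝ} {t : Fin T} {a : ℝ} (h : ∀ j ≤ t, d j ≤ a) :
    prefMax d t ≤ a :=
  ciSup_le fun k => h k.1 k.2

lemma exists_prefMax_eq (d : Fin T → ℝ) (t : Fin T) : ∃ j ≤ t, prefMax d t = d j := by
  obtain ⟨k, hk⟩ := Finite.exists_max fun k : {k : Fin T // k ≤ t} => d k.1
  exact ⟨k.1, k.2, le_antisymm (ciSup_le hk) (le_prefMax d k.2)⟩

lemma continuous_prefMax (t : Fin T) : Continuous fun d : Fin T → ℝ => prefMax d t := by
  simp_rw [prefMax, ← Finset.sup'_univ_eq_ciSup]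
  exact Continuous.finset_sup'_apply univ_nonempty fun k _ => continuous_apply _

section Ref

variable {dlo dhi : ℝ}

lemma le_ref {d : Fin T → ℝ} (hd : inD dlo dhi d) (t j : Fin T) : dlo ≤ ref dlo d t j := by
  unfold ref
  split_ifs
  exacts [(hd j).1, le_rfl]

lemma iSup_ref [NeZero T] {d : Fin T → ℝ} {t : Fin T} (hdt : dlo ≤ d t) :
    ⨆ j, ref dlo d t j = prefMax d t := by
  refine le_antisymm (ciSup_le fun j => ?_) ?_
  · unfold ref
    split_ifs with hj
    exacts [le_prefMax d hj, hdt.trans (le_prefMax d le_rfl)]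
  · obtain ⟨j, hj, hEq⟩ := exists_prefMax_eq d t
    rw [hEq]
    simpa [ref, hj] using Finite.le_ciSup (ref dlo d t) j

lemma ref_comp_perm (d : Fin T → ℝ) {g : Equiv.Perm (Fin T)} {t : Fin T}
    (hg : ∀ j, g j ≤ t ↔ j ≤ t) : ref dlo (d ∘ g) t = ref dlo d t ∘ g := by
  ext j
  simp [ref, hg j]

lemma continuous_ref (t : Fin T) : Continuous fun d : Fin T → ℝ => ref dlo d t :=
  continuous_pi fun k => by
    unfold ref
    split_ifs
    exacts [continuous_apply k, continuous_const]

end Ref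

section Pcr

variable {c dmax dlo dhi π : ℝ}

lemma pcr_nonneg (d : Fin T → ℝ) (t : Fin T) : 0 ≤ pcr c dmax dlo π d t :=
  le_max_right _ _

variable [NeZero T]

lemma pcr_pos_of_prefMax_le (hc : 0 < c) (hdmax : 0 < dmax) (hdlo : 0 < dlo) (hπ : 0 < π)
    {d : Fin T → ℝ} (hd : inD dlo dhi d) {t : Fin T} (ht : prefMax d t ≤ d t) :
    0 < pcr c dmax dlo π d t := by
  have hpeak : 0 < ⨆ j, ref dlo d t j :=
    (hdlo.trans_le (le_ref hd t t)).trans_le (Finite.le_ciSup _ t)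
  have hσ := offOpt_pos hc hdmax (fun j => hdlo.le.trans (le_ref hd t j)) hpeak
  exact lt_max_iff.2 (Or.inl (by linarith [div_pos hσ hπ]))

lemma pcr_comp_perm {d : Fin T → ℝ} {t : Fin T} (hdt : dlo ≤ d t) {g : Equiv.Perm (Fin T)}
    (hg : ∀ j, g j ≤ t ↔ j ≤ t) (hgt : g t = t) :
    pcr c dmax dlo π (d ∘ g) t = pcr c dmax dlo π d t := by
  have href := ref_comp_perm (dlo := dlo) d hg
  have hpref : prefMax (d ∘ g) t = prefMax d t := by
    rw [← iSup_ref (show dlo ≤ (d ∘ g) t by simpa [hgt] using hdt), ← iSup_ref hdt, href]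
    exact Equiv.iSup_comp (g := ref dlo d t) g
  simp only [pcr, href, hpref, offOpt_comp_perm, Function.comp_apply, hgt]

variable {d : Fin T → ℝ} {n q : Fin T}

lemma pcr_swap_of_lt_or_lt (hd : inD dlo dhi d) (hnq : n < q) {t : Fin T} (ht : t < n ∨ q < t) :
    pcr c dmax dlo π (d ∘ Equiv.swap n q) t = pcr c dmax dlo π d t := by
  have hfix : Equiv.swap n q t = t := by
    rcases ht with h | h
    exacts [Equiv.swap_apply_of_ne_of_ne h.ne (h.trans hnq).ne,
      Equiv.swap_apply_of_ne_of_ne (hnq.trans h).ne' h.ne']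
  refine pcr_comp_perm (hd t).1 (Equiv.swap_apply_le_iff ?_) hfix
  rcases ht with h | h
  exacts [iff_of_false (not_le.2 h) (not_le.2 (h.trans hnq)), iff_of_true (hnq.trans h).le h.le]

lemma pcr_le_pcr_swap (hc : 0 < c) (hdmax : 0 < dmax) (hdlo : 0 < dlo) (hπ : 0 < π)
    (hd : inD dlo dhi d) (hnq : n < q) (hn : pcr c dmax dlo π d n = 0)
    (hmid : ∀ j, n < j → j < q → pcr c dmax dlo π d j = 0) :
    pcr c dmax dlo π d q ≤ pcr c dmax dlo π (d ∘ Equiv.swap n q) n := by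
  set e := d ∘ Equiv.swap n q with he
  have hen : e n = d q := by simp [he]
  have hlt : ∀ j < n, e j = d j := fun j hj => by
    simp [he, Equiv.swap_apply_of_ne_of_ne hj.ne (hj.trans hnq).ne]
  -- running peaks of `d` are discharged on, so the peak up to `q` sits before `n` or at `q`
  obtain ⟨j₀, hj₀q, hdj₀⟩ := exists_prefMax_eq d q
  have hj₀ : j₀ < n ∨ j₀ = q := by
    have hpos : 0 < pcr c dmax dlo π d j₀ := pcr_pos_of_prefMax_le hc hdmax hdlo hπ hd
      ((prefMax_le fun k hk => le_prefMax d (hk.trans hj₀q)).trans hdj₀.le)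
    rcases lt_trichotomy j₀ n with h | rfl | h
    · exact .inl h
    · exact absurd hn hpos.ne'
    · exact hj₀q.lt_or_eq.imp (fun h' => absurd (hmid j₀ h h') hpos.ne') id
  have hpref : prefMax e n = prefMax d q := by
    refine le_antisymm (prefMax_le fun j hj => ?_) ?_
    · rcases hj.lt_or_eq with h | rfl
      · rw [hlt j h]; exact le_prefMax d (h.trans hnq).le
      · rw [hen]; exact le_prefMax d le_rfl
    · rw [hdj₀]
      rcases hj₀ with h | rfl
      · rw [← hlt j₀ h]; exact le_prefMax e h.le
      · rw [← hen]; exact le_prefMax e le_rfl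
  have hle : ∀ j, ref dlo e n j ≤ (ref dlo d q ∘ Equiv.swap n q) j + 0 := fun j => by
    rw [add_zero]
    simp only [ref, Function.comp_apply, he]
    split_ifs with h₁ h₂
    · rfl
    · rcases h₁.lt_or_eq with h | rfl
      · rw [Equiv.swap_apply_of_ne_of_ne h.ne (h.trans hnq).ne] at h₂
        exact absurd (h.trans hnq).le h₂
      · rw [Equiv.swap_apply_left] at h₂
        exact absurd le_rfl h₂
    · exact (hd _).1
    · rfl
  have hsup : ⨆ j, (ref dlo d q ∘ Equiv.swap n q) j ≤ (⨆ j, ref dlo e n j) + 0 := by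
    rw [add_zero, Function.comp_def, Equiv.iSup_comp (g := ref dlo d q), iSup_ref (hd q).1,
      iSup_ref (show dlo ≤ e n from hen ▸ (hd q).1), hpref]
  have hσ : offOpt c dmax (ref dlo d q) ≤ offOpt c dmax (ref dlo e n) := by
    rw [← offOpt_comp_perm (ref dlo d q) (Equiv.swap n q)]
    have := offOpt_le_offOpt_add hc.le hdmax.le (fun j => hdlo.le.trans (le_ref hd q _))
      (fun j => hdlo.le.trans (le_ref (fun j => hd _) n j)) le_rfl hle hsup
    rwa [mul_zero, add_zero] at this
  unfold pcr
  rw [hen, hpref]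
  gcongr

lemma sum_pcr_le_sum_pcr_swap (hc : 0 < c) (hdmax : 0 < dmax) (hdlo : 0 < dlo) (hπ : 0 < π)
    (hd : inD dlo dhi d) (hnq : n < q) (hn : pcr c dmax dlo π d n = 0)
    (hmid : ∀ j, n < j → j < q → pcr c dmax dlo π d j = 0) :
    ∑ t, pcr c dmax dlo π d t ≤ ∑ t, pcr c dmax dlo π (d ∘ Equiv.swap n q) t := by
  rw [← Equiv.sum_comp (Equiv.swap n q)]
  refine sum_le_sum fun t _ => ?_
  by_cases htn : t = n
  · subst htn
    rw [Equiv.swap_apply_left]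
    exact pcr_le_pcr_swap hc hdmax hdlo hπ hd hnq hn hmid
  by_cases hnt : n < t ∧ t ≤ q
  · have hzero : pcr c dmax dlo π d (Equiv.swap n q t) = 0 := by
      rcases hnt.2.lt_or_eq with h | rfl
      · rw [Equiv.swap_apply_of_ne_of_ne htn h.ne]; exact hmid t hnt.1 h
      · rw [Equiv.swap_apply_right]; exact hn
    rw [hzero]
    exact pcr_nonneg _ _
  · have ht : t < n ∨ q < t := by
      rw [not_and, not_le] at hnt
      exact (lt_or_gt_of_ne htn).imp id hnt
    have hfix : Equiv.swap n q t = t :=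
      Equiv.swap_apply_of_ne_of_ne htn (by rintro rfl; exact hnt ⟨hnq, le_rfl⟩)
    rw [hfix, pcr_swap_of_lt_or_lt hd hnq ht]

end Pcr

section WorstCase

variable {c dmax dlo dhi π : ℝ}

lemma isCompact_setOf_inD (dlo dhi : ℝ) : IsCompact {d : Fin T → ℝ | inD dlo dhi d} := by
  convert isCompact_univ_pi fun _ : Fin T => isCompact_Icc (a := dlo) (b := dhi) using 1
  ext d
  simp [inD, Pi.le_def, forall_and]

lemma Phi_eq_of_isMaxOn {d : Fin T → ℝ} (hd : inD dlo dhi d)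
    (hmax : IsMaxOn (fun d => ∑ t, pcr c dmax dlo π d t) {d | inD dlo dhi d} d) :
    Phi T c dmax dlo dhi π = ∑ t, pcr c dmax dlo π d t :=
  IsGreatest.csSup_eq ⟨⟨d, hd, rfl⟩, by rintro _ ⟨e, he, rfl⟩; exact hmax he⟩

variable [NeZero T]

lemma continuousOn_sum_pcr (hc : 0 ≤ c) (hdmax : 0 ≤ dmax) (hdlo : 0 ≤ dlo) :
    ContinuousOn (fun d => ∑ t, pcr c dmax dlo π d t) {d : Fin T → ℝ | inD dlo dhi d} := by
  refine continuousOn_finsetSum _ fun t _ => ?_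
  have hσ : ContinuousOn (fun d : Fin T → ℝ => offOpt c dmax (ref dlo d t))
      {d | inD dlo dhi d} :=
    (lipschitzOnWith_offOpt hc hdmax).continuousOn.comp (continuous_ref t).continuousOn
      fun d hd j => hdlo.trans (le_ref hd t j)
  exact (continuous_id.max continuous_const).comp_continuousOn
    ((((continuous_apply t).sub (continuous_prefMax t)).continuousOn).add (hσ.div_const π))

lemma exists_isMaxOn_pos_of_le (hc : 0 < c) (hdmax : 0 < dmax) (hdlo : 0 < dlo) (hπ : 0 < π)
    {d : Fin T → ℝ} (hd : inD dlo dhi d)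
    (hmax : IsMaxOn (fun d => ∑ t, pcr c dmax dlo π d t) {d | inD dlo dhi d} d)
    {n t : Fin T} (hnt : n ≤ t) (ht : 0 < pcr c dmax dlo π d t) :
    ∃ e, inD dlo dhi e ∧
      IsMaxOn (fun d => ∑ t, pcr c dmax dlo π d t) {d | inD dlo dhi d} e ∧
      (∀ j < n, pcr c dmax dlo π e j = pcr c dmax dlo π d j) ∧ 0 < pcr c dmax dlo π e n := by
  by_cases hn : 0 < pcr c dmax dlo π d n
  · exact ⟨d, hd, hmax, fun _ _ => rfl, hn⟩
  replace hn : pcr c dmax dlo π d n = 0 := le_antisymm (not_lt.1 hn) (pcr_nonneg d n)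
  obtain ⟨q, ⟨hnq, hq⟩, hqmin⟩ := wellFounded_lt.has_min {q | n < q ∧ 0 < pcr c dmax dlo π d q}
    ⟨t, hnt.lt_of_ne (by rintro rfl; exact ht.ne' hn), ht⟩
  have hmid : ∀ j, n < j → j < q → pcr c dmax dlo π d j = 0 := fun j hnj hjq =>
    le_antisymm (not_lt.1 fun hj => hqmin j ⟨hnj, hj⟩ hjq) (pcr_nonneg d j)
  refine ⟨d ∘ Equiv.swap n q, fun j => hd _, fun x hx => ?_, fun j hj => ?_, ?_⟩
  · exact (hmax hx).trans (sum_pcr_le_sum_pcr_swap hc hdmax hdlo hπ hd hnq hn hmid)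
  · exact pcr_swap_of_lt_or_lt hd hnq (.inl hj)
  · exact hq.trans_le (pcr_le_pcr_swap hc hdmax hdlo hπ hd hnq hn hmid)

lemma exists_isMaxOn_isLowerSet (hc : 0 < c) (hdmax : 0 < dmax) (hdlo : 0 < dlo)
    (hbd : dlo ≤ dhi) (hπ : 0 < π) :
    ∃ d : Fin T → ℝ, inD dlo dhi d ∧
      IsMaxOn (fun d => ∑ t, pcr c dmax dlo π d t) {d | inD dlo dhi d} d ∧
      IsLowerSet {t | 0 < pcr c dmax dlo π d t} := by
  classical
  let P : ℕ → Prop := fun m => ∃ d, inD dlo dhi d ∧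
    IsMaxOn (fun d => ∑ t, pcr c dmax dlo π d t) {d : Fin T → ℝ | inD dlo dhi d} d ∧
    ∀ t : Fin T, (t : ℕ) < m → 0 < pcr c dmax dlo π d t
  obtain ⟨d₀, hd₀, hmax₀⟩ := (isCompact_setOf_inD (T := T) dlo dhi).exists_isMaxOn
    ⟨fun _ => dlo, fun _ => ⟨le_rfl, hbd⟩⟩ (continuousOn_sum_pcr (π := π) hc.le hdmax.le hdlo.le)
  obtain ⟨d, hd, hmax, hrun⟩ : P (Nat.findGreatest P T) :=
    Nat.findGreatest_spec (Nat.zero_le T) ⟨d₀, hd₀, hmax₀, fun t ht => absurd ht t.val.not_lt_zero⟩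
  refine ⟨d, hd, hmax, fun t s hst ht => not_not.1 fun hs => ?_⟩
  set m := Nat.findGreatest P T
  have hms : m ≤ s := not_lt.1 fun h => hs (hrun s h)
  obtain ⟨e, he, hemax, hpre, hpos⟩ := exists_isMaxOn_pos_of_le hc hdmax hdlo hπ hd hmax
    (n := ⟨m, hms.trans_lt s.2⟩) (hms.trans hst) ht
  refine Nat.findGreatest_is_greatest (Nat.lt_succ_self m) (by omega) ⟨e, he, hemax, fun j hj => ?_⟩
  rcases Nat.lt_succ_iff_lt_or_eq.1 hj with h | h
  · rw [hpre j h]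
    exact hrun j h
  · rwa [show j = ⟨m, hms.trans_lt s.2⟩ from Fin.ext h]

end WorstCase

/-- if `Φ(π*) = c`, there is a worst-case input on which `pCR-PRM(π*)`
discharges strictly positive amounts on an initial block of slots, exhausting the
capacity, and nothing afterwards. -/
theorem stmt15 (T : ℕ) (hT : 0 < T) (c dmax dlo dhi : ℝ)
    (hc : 0 < c) (hdmax : 0 < dmax) (hdlo : 0 < dlo) (hbd : dlo ≤ dhi)
    (π : ℝ) (hπ : 1 ≤ π) (hΦ : Phi T c dmax dlo dhi π = c) :
    ∃ d : Fin T → ℝ, inD dlo dhi d ∧ ∃ k : Fin T,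
      (∑ t, pcr c dmax dlo π d t) = c ∧
      (∀ t, t ≤ k → 0 < pcr c dmax dlo π d t) ∧
      (∀ t, k < t → pcr c dmax dlo π d t = 0) := by
  have : NeZero T := ⟨hT.ne'⟩
  have hπ₀ : 0 < π := one_pos.trans_le hπ
  obtain ⟨d, hd, hmax, hlow⟩ := exists_isMaxOn_isLowerSet (T := T) hc hdmax hdlo hbd hπ₀
  have hfirst : 0 < pcr c dmax dlo π d 0 := pcr_pos_of_prefMax_le hc hdmax hdlo hπ₀ hd
    (prefMax_le fun j hj => by rw [nonpos_iff_eq_zero.1 hj])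
  obtain ⟨k, hpos, hzero⟩ :=
    exists_forall_le_pos_forall_lt_eq_zero (pcr_nonneg d) hlow hfirst
  exact ⟨d, hd, k, (Phi_eq_of_isMaxOn hd hmax).symm.trans hΦ, hpos, hzero⟩
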